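/- Let q be a prime, n ≥ 2, and R a commutative ring with unity. If every n×n matrix over R is a sum of q-th powers of matrices over R, then every element of R is a q-th power modulo q·R. -/

import Mathlib

/-!
Reducing modulo `q`, the ring `R ⧸ qR` has characteristic `q` (unless `q` is a unit, where the
claim is trivial), and there the characteristic polynomial of `M ^ q` is that of `M` with
Frobenius applied to its coefficients, so `trace (M ^ q) = (trace M) ^ q`. Write
`diag(α, 0, …, 0) = ∑ Nᵢ ^ q`; taking traces modulo `q` and using additivity of Frobenius gives
`α ≡ (∑ trace Nᵢ) ^ q`.
-/

open Polynomial Matrix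

namespace Matrix

variable {n : Type*} [DecidableEq n] [Fintype n] {S : Type*} [CommRing S]
  (p : ℕ) [Fact p.Prime] [CharP S p]

theorem charpoly_pow_eq_map_frobenius [Nonempty n] (M : Matrix n n S) :
    (M ^ p).charpoly = M.charpoly.map (frobenius S p) := by
  apply expand_injective (Fact.out : p.Prime).pos
  -- `det (X - M) ^ p = det ((X - M) ^ p) = det (X ^ p - M ^ p)` in characteristic `p`
  have expand_charpoly : expand S p (M ^ p).charpoly = M.charpoly ^ p := by
    unfold charpoly
    rw [AlgHom.map_det, ← coe_detMonoidHom, ← (detMonoidHom : Matrix n n S[X] →* S[X]).map_pow]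
    apply congr_arg det
    refine matPolyEquiv.injective ?_
    rw [map_pow, matPolyEquiv_charmatrix, sub_pow_char_of_commute _ (C M).commute_X, ← C_pow]
    exact matPolyEquiv_eq_X_pow_sub_C p M
  rw [expand_charpoly, ← map_frobenius_expand, map_expand]

theorem trace_pow_char (M : Matrix n n S) : trace (M ^ p) = trace M ^ p := by
  cases isEmpty_or_nonempty n
  · simp [trace, zero_pow (Fact.out : p.Prime).ne_zero]
  have coeff_eq := congr_arg (·.coeff (Fintype.card n - 1)) (charpoly_pow_eq_map_frobenius p M)
  simp only [coeff_map, frobenius_def] at coeff_eq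
  rw [trace_eq_neg_charpoly_coeff, trace_eq_neg_charpoly_coeff, coeff_eq, neg_pow,
    neg_one_pow_char S p, neg_one_mul]

theorem trace_sum_pow_char {ι : Type*} (s : Finset ι) (N : ι → Matrix n n S) :
    trace (∑ i ∈ s, N i ^ p) = (∑ i ∈ s, trace (N i)) ^ p := by
  simp only [trace_sum, trace_pow_char, sum_pow_char]

end Matrix

theorem elem_qth_power_mod_q (R : Type*) [CommRing R] (q n : ℕ) (hq : q.Prime) (hn : 2 ≤ n)
    (h : ∀ M : Matrix (Fin n) (Fin n) R,
      ∃ (l : ℕ) (N : Fin l → Matrix (Fin n) (Fin n) R), M = ∑ i, (N i) ^ q) :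
    ∀ α : R, ∃ y z : R, α = y ^ q + q * z := by
  intro α
  by_cases hunit : IsUnit (q : R)
  · obtain ⟨u, hu⟩ := hunit
    exact ⟨0, ↑u⁻¹ * α, by rw [zero_pow hq.ne_zero, zero_add, ← hu, Units.mul_inv_cancel_left]⟩
  have : Fact q.Prime := ⟨hq⟩
  have : CharP (R ⧸ Ideal.span {(q : R)}) q := CharP.quotient R q hunit
  let π := Ideal.Quotient.mk (Ideal.span {(q : R)})
  let i₀ : Fin n := ⟨0, by omega⟩
  obtain ⟨l, N, hN⟩ := h (diagonal (Pi.single i₀ α))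
  have hα : π α = π ((∑ i, trace (N i)) ^ q) := calc
    π α = trace (π.mapMatrix (diagonal (Pi.single i₀ α))) := by simp [← map_sum]
    _ = trace (∑ i, π.mapMatrix (N i) ^ q) := by simp only [hN, map_sum, map_pow]
    _ = (∑ i, trace (π.mapMatrix (N i))) ^ q := trace_sum_pow_char q _ _
    _ = π ((∑ i, trace (N i)) ^ q) := by
      simp only [map_pow, map_sum, AddMonoidHom.map_trace π, RingHom.mapMatrix_apply]
  obtain ⟨z, hz⟩ := Ideal.mem_span_singleton'.1 (Ideal.Quotient.eq.1 hα)
  exact ⟨∑ i, trace (N i), z, by linear_combination -hz⟩
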